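/- Let Ω be a compact subset of ℝ and let 0 < H ≤ 1. Then the function (μ,ν) ↦ W₂(μ,ν)^{2H} is a negative definite kernel on the set of Borel probability measures supported in Ω: for every n, all Borel probability measures μ₁, …, μₙ supported in Ω and all c₁, …, cₙ ∈ ℝ with c₁ + … + cₙ = 0, one has Σ_{i,j} c_i c_j W₂(μ_i, μ_j)^{2H} ≤ 0. -/

import Mathlib

open MeasureTheory
open scoped ENNReal

/-- `π` is a coupling of `μ` and `ν`: a probability measure on `ℝ × ℝ` whose first
marginal is `μ` and whose second marginal is `ν`. -/
def IsCoupling (π : Measure (ℝ × ℝ)) (μ ν : Measure ℝ) : Prop :=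
  IsProbabilityMeasure π ∧ π.map Prod.fst = μ ∧ π.map Prod.snd = ν

/-- The squared Wasserstein distance `W₂²(μ,ν)`: the infimum over all couplings `π`
of `μ` and `ν` of the transport cost `∫ (x-y)² dπ(x,y)`. -/
noncomputable def W2sq (μ ν : Measure ℝ) : ℝ≥0∞ :=
  sInf {I : ℝ≥0∞ | ∃ π : Measure (ℝ × ℝ), IsCoupling π μ ν ∧
    I = ∫⁻ p, ENNReal.ofReal ((p.1 - p.2) ^ 2) ∂π}

/-- The Wasserstein distance `W₂(μ,ν)`. -/
noncomputable def W2 (μ ν : Measure ℝ) : ℝ :=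
  Real.sqrt (W2sq μ ν).toReal

/-!
On `ℝ` the quantile coupling `t ↦ (F_μ⁻¹ t, F_ν⁻¹ t)` is optimal, so
`W₂(μ, ν) = ‖F_μ⁻¹ - F_ν⁻¹‖` in `L²(0, 1)`: measures with compact support embed isometrically
into a Hilbert space. Optimality: for `x, y ≥ a` we have
`(x - y)² = (x - a)² + (y - a)² - 2 (x - a)(y - a)`, the first two terms only depend on the
marginals, and `∫ (x - a)(y - a) dπ = ∫∫_{s, t > a} π(x > s, y > t) ds dt` is largest when
`π(x > s, y > t) = min (μ(x > s), ν(y > t))` (Fréchet's bound), which the quantile coupling attains.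

In a Hilbert space, `exp(-s ‖xᵢ - xⱼ‖²)` is a positive semidefinite matrix for `s ≥ 0`: it is a
diagonal rescaling of the entrywise exponential of the Gram matrix, and entrywise powers of a
positive semidefinite matrix are positive semidefinite (Schur). Writing
`(t + r)⁻¹ = ∫₀^∞ e^{-u(t + r)} du` and, for `0 < H < 1`,
`r ^ H = C⁻¹ ∫₀^∞ t ^ H (t⁻¹ - (t + r)⁻¹) dt` turns this into `∑ cᵢ cⱼ ‖xᵢ - xⱼ‖^{2H} ≤ 0`
whenever `∑ cᵢ = 0`; for `H = 1` the sum is `-2 ‖∑ cᵢ xᵢ‖²`.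
-/

open Set Filter ProbabilityTheory
open scoped Nat

namespace Matrix

variable {ι : Type*} [Fintype ι] {A : Matrix ι ι ℝ}

lemma PosSemidef.sum_mul_mul_nonneg (hA : A.PosSemidef) (c : ι → ℝ) :
    0 ≤ ∑ i, ∑ j, c i * c j * A i j := by
  have := hA.dotProduct_mulVec_nonneg c
  simpa [dotProduct, mulVec, Finset.mul_sum, mul_comm, mul_left_comm, mul_assoc] using this

lemma PosSemidef.map_pow (hA : A.PosSemidef) (k : ℕ) : (A.map (· ^ k)).PosSemidef := by
  induction k with
  | zero =>
    have h : A.map (· ^ 0) = gram ℝ (fun _ : ι => (1 : ℝ)) := by ext; simp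
    exact h ▸ posSemidef_gram ℝ _
  | succ k ih =>
    have h : A.map (· ^ (k + 1)) = A.map (· ^ k) ⊙ A := by ext; simp [pow_succ]
    exact h ▸ ih.hadamard hA

lemma PosSemidef.sum_mul_mul_exp_nonneg (hA : A.PosSemidef) (c : ι → ℝ) :
    0 ≤ ∑ i, ∑ j, c i * c j * Real.exp (A i j) := by
  have hsum : HasSum (fun k : ℕ => (∑ i, ∑ j, c i * c j * A i j ^ k) / k !)
      (∑ i, ∑ j, c i * c j * Real.exp (A i j)) := by
    simp_rw [Finset.sum_div, mul_div_assoc]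
    refine hasSum_sum fun i _ => hasSum_sum fun j _ => (?_ : HasSum _ _).mul_left _
    rw [Real.exp_eq_exp_ℝ]
    exact NormedSpace.expSeries_div_hasSum_exp _
  exact hsum.nonneg fun k => div_nonneg ((hA.map_pow k).sum_mul_mul_nonneg c) (by positivity)

end Matrix

section KernelPowers

variable {ι : Type*} [Fintype ι] {K : ι → ι → ℝ} {c : ι → ℝ}

lemma sum_mul_mul_inv_add_nonneg (hK : ∀ i j, 0 ≤ K i j)
    (hexp : ∀ s, 0 ≤ s → 0 ≤ ∑ i, ∑ j, c i * c j * Real.exp (-(s * K i j))) {t : ℝ} (ht : 0 < t) :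
    0 ≤ ∑ i, ∑ j, c i * c j * (t + K i j)⁻¹ := by
  have hlaplace : ∀ i j, (t + K i j)⁻¹ = ∫ s in Ioi 0, Real.exp (-(t + K i j) * s) := by
    intro i j
    rw [integral_exp_mul_Ioi (by linarith [hK i j]) 0, mul_zero, Real.exp_zero, neg_div_neg_eq,
      one_div]
  have hint : ∀ i j, IntegrableOn (fun s => Real.exp (-(t + K i j) * s)) (Ioi 0) := fun i j =>
    integrableOn_exp_mul_Ioi (by linarith [hK i j]) 0
  simp_rw [hlaplace, ← integral_const_mul, ← integral_finsetSum _ fun j _ => (hint _ j).const_mul _]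
  rw [← integral_finsetSum _ fun i _ => integrable_finsetSum _ fun j _ => (hint i j).const_mul _]
  refine setIntegral_nonneg measurableSet_Ioi fun s (hs : 0 < s) => ?_
  have hfactor : ∀ i j, c i * c j * Real.exp (-(t + K i j) * s)
      = Real.exp (-(t * s)) * (c i * c j * Real.exp (-(s * K i j))) := fun i j => by
    rw [mul_left_comm, ← Real.exp_add]; ring_nf
  simp_rw [hfactor, ← Finset.mul_sum]
  exact mul_nonneg (Real.exp_pos _).le (hexp s hs.le)

open Real in
lemma sum_mul_mul_rpow_nonpos (hK : ∀ i j, 0 ≤ K i j)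
    (hexp : ∀ s, 0 ≤ s → 0 ≤ ∑ i, ∑ j, c i * c j * Real.exp (-(s * K i j)))
    (hc : ∑ i, c i = 0) {p : ℝ} (hp : p ∈ Ioo 0 1) :
    ∑ i, ∑ j, c i * c j * K i j ^ p ≤ 0 := by
  have hint : ∀ i j, IntegrableOn (rpowIntegrand₀₁ p · (K i j)) (Ioi 0) := fun i j =>
    integrableOn_rpowIntegrand₀₁_Ioi hp (hK i j)
  simp_rw [rpow_eq_const_mul_integral hp (hK _ _), mul_left_comm _ (_⁻¹), ← Finset.mul_sum,
    ← integral_const_mul]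
  simp_rw [← integral_finsetSum _ fun j _ => (hint _ j).const_mul _]
  rw [← integral_finsetSum _ fun i _ => integrable_finsetSum _ fun j _ => (hint i j).const_mul _]
  refine mul_nonpos_of_nonneg_of_nonpos (inv_nonneg.2 (integral_rpowIntegrand₀₁_one_pos hp).le) ?_
  refine setIntegral_nonpos measurableSet_Ioi fun t (ht : 0 < t) => ?_
  have hcc : ∑ i, ∑ j, c i * c j = 0 := by rw [← Finset.sum_mul_sum, hc, zero_mul]
  have hsplit : ∑ i, ∑ j, c i * c j * rpowIntegrand₀₁ p t (K i j)
      = t ^ p * t⁻¹ * ∑ i, ∑ j, c i * c j - t ^ p * ∑ i, ∑ j, c i * c j * (t + K i j)⁻¹ := by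
    simp only [Finset.mul_sum, ← Finset.sum_sub_distrib, rpowIntegrand₀₁]
    congr! 2; ring
  rw [hsplit, hcc, mul_zero, zero_sub, neg_nonpos]
  exact mul_nonneg (by positivity) (sum_mul_mul_inv_add_nonneg hK hexp ht)

end KernelPowers

section InnerProductSpace

variable {ι E : Type*} [Fintype ι] [NormedAddCommGroup E] [InnerProductSpace ℝ E]

open Matrix in
lemma sum_mul_mul_exp_neg_mul_norm_sub_sq_nonneg (x : ι → E) {s : ℝ} (hs : 0 ≤ s) (c : ι → ℝ) :
    0 ≤ ∑ i, ∑ j, c i * c j * Real.exp (-(s * ‖x i - x j‖ ^ 2)) := by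
  have hA : ((2 * s) • gram ℝ x).PosSemidef := (posSemidef_gram ℝ x).smul (by positivity)
  convert hA.sum_mul_mul_exp_nonneg (fun i => c i * Real.exp (-(s * ‖x i‖ ^ 2)))
    using 3 with i _ j _
  simp only [Matrix.smul_apply, gram_apply, smul_eq_mul, norm_sub_sq_real]
  rw [show -(s * (‖x i‖ ^ 2 - 2 * inner ℝ (x i) (x j) + ‖x j‖ ^ 2))
      = -(s * ‖x i‖ ^ 2) + (-(s * ‖x j‖ ^ 2) + 2 * s * inner ℝ (x i) (x j)) by ring,
    Real.exp_add, Real.exp_add]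
  ring

open Matrix in
lemma sum_mul_mul_norm_sub_sq_nonpos (x : ι → E) {c : ι → ℝ} (hc : ∑ i, c i = 0) :
    ∑ i, ∑ j, c i * c j * ‖x i - x j‖ ^ 2 ≤ 0 := by
  have hdiag : ∑ i, ∑ j, c i * c j * ‖x i‖ ^ 2 = 0 := by
    simp_rw [mul_right_comm (c _) (c _), ← Finset.mul_sum, hc, mul_zero, Finset.sum_const_zero]
  have hdiag' : ∑ i, ∑ j, c i * c j * ‖x j‖ ^ 2 = 0 := by
    simp_rw [mul_assoc, ← Finset.mul_sum, ← Finset.sum_mul, hc, zero_mul]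
  have hgram := (posSemidef_gram ℝ x).sum_mul_mul_nonneg c
  have hexpand : ∑ i, ∑ j, c i * c j * ‖x i - x j‖ ^ 2
      = ∑ i, ∑ j, c i * c j * ‖x i‖ ^ 2 + ∑ i, ∑ j, c i * c j * ‖x j‖ ^ 2
        - 2 * ∑ i, ∑ j, c i * c j * gram ℝ x i j := by
    simp only [norm_sub_sq_real, gram_apply, Finset.mul_sum, ← Finset.sum_add_distrib,
      ← Finset.sum_sub_distrib]
    congr! 2; ring
  linarith

lemma sum_mul_mul_norm_sub_rpow_nonpos (x : ι → E) {c : ι → ℝ} (hc : ∑ i, c i = 0) {H : ℝ}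
    (hH0 : 0 < H) (hH1 : H ≤ 1) :
    ∑ i, ∑ j, c i * c j * ‖x i - x j‖ ^ (2 * H) ≤ 0 := by
  have hsq : ∀ i j, ‖x i - x j‖ ^ (2 * H) = (‖x i - x j‖ ^ 2) ^ H := fun i j => by
    rw [Real.rpow_mul (norm_nonneg _), Real.rpow_two]
  simp_rw [hsq]
  rcases hH1.lt_or_eq with hH1 | rfl
  · exact sum_mul_mul_rpow_nonpos (fun _ _ => by positivity)
      (fun s hs => sum_mul_mul_exp_neg_mul_norm_sub_sq_nonneg x hs c) hc ⟨hH0, hH1⟩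
  · simpa using sum_mul_mul_norm_sub_sq_nonpos x hc

end InnerProductSpace

instance : IsProbabilityMeasure (volume.restrict (Ioo (0 : ℝ) 1)) :=
  ⟨by simp [Real.volume_Ioo]⟩

/-- Generalized inverse of the cdf. Outside `(0, 1)` its values are junk (`sInf` of an empty or
unbounded set). -/
noncomputable def quantile (μ : Measure ℝ) (t : ℝ) : ℝ := sInf {x | t ≤ cdf μ x}

section Quantile

variable {μ : Measure ℝ} {t : ℝ}

lemma bddBelow_setOf_le_cdf (ht : 0 < t) : BddBelow {x | t ≤ cdf μ x} := by
  obtain ⟨y, hy⟩ := ((tendsto_cdf_atBot μ).eventually (gt_mem_nhds ht)).exists_forall_of_atBot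
  exact ⟨y, fun x hx => le_of_not_gt fun hxy => (hy x hxy.le).not_ge hx⟩

lemma nonempty_setOf_le_cdf (ht : t < 1) : {x | t ≤ cdf μ x}.Nonempty :=
  ((tendsto_cdf_atTop μ).eventually (lt_mem_nhds ht)).exists.imp fun _ => le_of_lt

lemma le_cdf_quantile (ht : t ∈ Ioo 0 1) : t ≤ cdf μ (quantile μ t) := by
  have hright : ∀ y, quantile μ t < y → t ≤ cdf μ y := fun y hy => by
    obtain ⟨x, hx, hxy⟩ := exists_lt_of_csInf_lt (nonempty_setOf_le_cdf ht.2) hy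
    exact hx.trans (monotone_cdf μ hxy.le)
  refine ge_of_tendsto ((cdf μ).right_continuous _ |>.tendsto.mono_left
    (nhdsWithin_mono _ Ioi_subset_Ici_self)) ?_
  filter_upwards [self_mem_nhdsWithin] with y hy using hright y hy

lemma quantile_le_iff (ht : t ∈ Ioo 0 1) {x : ℝ} : quantile μ t ≤ x ↔ t ≤ cdf μ x :=
  ⟨fun h => (le_cdf_quantile ht).trans (monotone_cdf μ h),
    fun h => csInf_le (bddBelow_setOf_le_cdf ht.1) h⟩

lemma monotoneOn_quantile : MonotoneOn (quantile μ) (Ioo 0 1) := fun _ hs _ ht hst =>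
  (quantile_le_iff hs).2 (hst.trans ((quantile_le_iff ht).1 le_rfl))

lemma aemeasurable_quantile : AEMeasurable (quantile μ) (volume.restrict (Ioo 0 1)) :=
  aemeasurable_restrict_of_monotoneOn measurableSet_Ioo monotoneOn_quantile

lemma preimage_quantile_Ioi_inter_Ioo (x : ℝ) :
    quantile μ ⁻¹' Ioi x ∩ Ioo 0 1 = Ioo (cdf μ x) 1 := by
  ext u
  simp only [mem_inter_iff, mem_preimage, mem_Ioi, mem_Ioo]
  constructor
  · rintro ⟨hx, hu⟩
    exact ⟨not_le.1 fun h => hx.not_ge ((quantile_le_iff hu).2 h), hu.2⟩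
  · rintro ⟨hx, hu1⟩
    have hu : u ∈ Ioo 0 1 := ⟨(cdf_nonneg μ x).trans_lt hx, hu1⟩
    exact ⟨not_le.1 fun h => hx.not_ge ((quantile_le_iff hu).1 h), hu⟩

lemma volume_Ioo_inter_Iic {c : ℝ} (hc1 : c ≤ 1) :
    volume (Ioo 0 1 ∩ Iic c) = ENNReal.ofReal c := by
  have hlow : volume (Ioo 0 c) ≤ volume (Ioo 0 1 ∩ Iic c) :=
    measure_mono fun u hu => ⟨⟨hu.1, hu.2.trans_le hc1⟩, hu.2.le⟩
  have hup : volume (Ioo 0 1 ∩ Iic c) ≤ volume (Ioc 0 c) := measure_mono fun u hu => ⟨hu.1.1, hu.2⟩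
  rw [Real.volume_Ioo, sub_zero] at hlow
  rw [Real.volume_Ioc, sub_zero] at hup
  exact le_antisymm hup hlow

lemma map_quantile [IsProbabilityMeasure μ] : (volume.restrict (Ioo 0 1)).map (quantile μ) = μ := by
  refine Measure.ext_of_Iic _ _ fun x => ?_
  have hpre : quantile μ ⁻¹' Iic x ∩ Ioo 0 1 = Ioo 0 1 ∩ Iic (cdf μ x) := by
    ext u
    simp only [mem_inter_iff, mem_preimage, mem_Iic]
    exact ⟨fun ⟨h, hu⟩ => ⟨hu, (quantile_le_iff hu).1 h⟩,
      fun ⟨hu, h⟩ => ⟨(quantile_le_iff hu).2 h, hu⟩⟩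
  rw [Measure.map_apply_of_aemeasurable aemeasurable_quantile measurableSet_Iic,
    Measure.restrict_apply' measurableSet_Ioo, hpre,
    volume_Ioo_inter_Iic (cdf_le_one μ x), ofReal_cdf]

lemma restrict_Ioo_preimage_quantile [IsProbabilityMeasure μ] {s : Set ℝ} (hs : MeasurableSet s) :
    volume.restrict (Ioo 0 1) (quantile μ ⁻¹' s) = μ s := by
  rw [← Measure.map_apply_of_aemeasurable aemeasurable_quantile hs, map_quantile]

lemma ae_restrict_quantile_mem [IsProbabilityMeasure μ] {s : Set ℝ} (hμ : ∀ᵐ x ∂μ, x ∈ s) :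
    ∀ᵐ t ∂(volume.restrict (Ioo 0 1)), quantile μ t ∈ s :=
  ae_of_ae_map aemeasurable_quantile (by rwa [map_quantile])

lemma memLp_quantile [IsProbabilityMeasure μ] {a b : ℝ} (hμ : ∀ᵐ x ∂μ, x ∈ Icc a b)
    (p : ℝ≥0∞) : MemLp (quantile μ) p (volume.restrict (Ioo 0 1)) :=
  .of_bound aemeasurable_quantile.aestronglyMeasurable (max |a| |b|) <| by
    filter_upwards [ae_restrict_quantile_mem hμ] with t ht using abs_le_max_abs_abs ht.1 ht.2

end Quantile

noncomputable def quantileCoupling (μ ν : Measure ℝ) : Measure (ℝ × ℝ) :=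
  (volume.restrict (Ioo 0 1)).map fun t => (quantile μ t, quantile ν t)

section Coupling

variable {π : Measure (ℝ × ℝ)} {μ ν : Measure ℝ}

lemma IsCoupling.measure_prod_le_min (hπ : IsCoupling π μ ν) {s t : Set ℝ} (hs : MeasurableSet s)
    (ht : MeasurableSet t) : π (s ×ˢ t) ≤ min (μ s) (ν t) := by
  rw [← hπ.2.1, ← hπ.2.2, Measure.map_apply measurable_fst hs, Measure.map_apply measurable_snd ht]
  exact le_min (measure_mono (prod_subset_preimage_fst s t))
    (measure_mono (prod_subset_preimage_snd s t))

lemma IsCoupling.ae_fst (hπ : IsCoupling π μ ν) {P : ℝ → Prop} (hμ : ∀ᵐ x ∂μ, P x) :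
    ∀ᵐ p ∂π, P p.1 :=
  ae_of_ae_map measurable_fst.aemeasurable (hπ.2.1 ▸ hμ)

lemma IsCoupling.ae_snd (hπ : IsCoupling π μ ν) {P : ℝ → Prop} (hν : ∀ᵐ y ∂ν, P y) :
    ∀ᵐ p ∂π, P p.2 :=
  ae_of_ae_map measurable_snd.aemeasurable (hπ.2.2 ▸ hν)

lemma ofReal_sub_sq_add_two_mul {x y a : ℝ} (hx : a ≤ x) (hy : a ≤ y) :
    ENNReal.ofReal ((x - y) ^ 2) + 2 * (ENNReal.ofReal (x - a) * ENNReal.ofReal (y - a))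
      = ENNReal.ofReal ((x - a) ^ 2) + ENNReal.ofReal ((y - a) ^ 2) := by
  rw [← ENNReal.ofReal_mul (by linarith), ← ENNReal.ofReal_ofNat,
    ← ENNReal.ofReal_mul (by norm_num), ← ENNReal.ofReal_add (by positivity) (by nlinarith),
    ← ENNReal.ofReal_add (by positivity) (by positivity)]
  congr 1; ring

lemma IsCoupling.lintegral_sq_sub_add_two_mul (hπ : IsCoupling π μ ν) {a : ℝ} (hμ : ∀ᵐ x ∂μ, a ≤ x)
    (hν : ∀ᵐ y ∂ν, a ≤ y) :
    ∫⁻ p, ENNReal.ofReal ((p.1 - p.2) ^ 2) ∂π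
        + 2 * ∫⁻ p, ENNReal.ofReal (p.1 - a) * ENNReal.ofReal (p.2 - a) ∂π
      = ∫⁻ x, ENNReal.ofReal ((x - a) ^ 2) ∂μ + ∫⁻ y, ENNReal.ofReal ((y - a) ^ 2) ∂ν := by
  rw [← hπ.2.1, ← hπ.2.2, lintegral_map (by fun_prop) measurable_fst,
    lintegral_map (by fun_prop) measurable_snd, ← lintegral_const_mul _ (by fun_prop),
    ← lintegral_add_left (by fun_prop), ← lintegral_add_left (by fun_prop)]
  refine lintegral_congr_ae ?_
  filter_upwards [hπ.ae_fst hμ, hπ.ae_snd hν] with p hx hy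
  exact ofReal_sub_sq_add_two_mul hx hy

lemma lintegral_ofReal_sub_mul_ofReal_sub (π : Measure (ℝ × ℝ)) [SFinite π] (a : ℝ) :
    ∫⁻ p, ENNReal.ofReal (p.1 - a) * ENNReal.ofReal (p.2 - a) ∂π
      = ∫⁻ z in Ioi a ×ˢ Ioi a, π (Ioi z.1 ×ˢ Ioi z.2) := by
  set S : Set ((ℝ × ℝ) × (ℝ × ℝ)) :=
    {w | w.2 ∈ Ioi a ×ˢ Ioi a ∧ w.2.1 < w.1.1 ∧ w.2.2 < w.1.2}
  have hS : MeasurableSet S :=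
    (measurable_snd (measurableSet_Ioi.prod measurableSet_Ioi)).inter
      ((measurableSet_lt measurable_snd.fst measurable_fst.fst).inter
        (measurableSet_lt measurable_snd.snd measurable_fst.snd))
  have hslice_fst : ∀ p : ℝ × ℝ, Prod.mk p ⁻¹' S = Ioo a p.1 ×ˢ Ioo a p.2 := fun p => by
    ext z
    exact ⟨fun ⟨⟨h1, h2⟩, h3, h4⟩ => ⟨⟨h1, h3⟩, h2, h4⟩,
      fun ⟨⟨h1, h3⟩, h2, h4⟩ => ⟨⟨h1, h2⟩, h3, h4⟩⟩
  have hslice_snd : ∀ z : ℝ × ℝ, π ((·, z) ⁻¹' S)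
      = (Ioi a ×ˢ Ioi a).indicator (fun z => π (Ioi z.1 ×ˢ Ioi z.2)) z := fun z => by
    by_cases hz : z ∈ Ioi a ×ˢ Ioi a
    · rw [indicator_of_mem hz]
      congr 1
      ext p
      exact ⟨fun h => h.2, fun h => ⟨hz, h⟩⟩
    · rw [indicator_of_notMem hz]
      have hempty : (·, z) ⁻¹' S = ∅ := eq_empty_of_forall_notMem fun _ hp => hz hp.1
      rw [hempty, measure_empty]
  calc ∫⁻ p, ENNReal.ofReal (p.1 - a) * ENNReal.ofReal (p.2 - a) ∂π
      = ∫⁻ p, volume (Prod.mk p ⁻¹' S) ∂π := by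
        simp_rw [hslice_fst, Measure.volume_eq_prod, Measure.prod_prod, Real.volume_Ioo]
    _ = ∫⁻ z, π ((·, z) ⁻¹' S) := by
        rw [← Measure.prod_apply hS, Measure.prod_apply_symm hS]
    _ = ∫⁻ z in Ioi a ×ˢ Ioi a, π (Ioi z.1 ×ˢ Ioi z.2) := by
        simp_rw [hslice_snd, lintegral_indicator (measurableSet_Ioi.prod measurableSet_Ioi)]

lemma lintegral_ofReal_sub_sq_ne_top [IsFiniteMeasure μ] {a b : ℝ} (hμ : ∀ᵐ x ∂μ, x ∈ Icc a b) :
    ∫⁻ x, ENNReal.ofReal ((x - a) ^ 2) ∂μ ≠ ∞ := by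
  refine ne_top_of_le_ne_top (b := ∫⁻ _, ENNReal.ofReal ((b - a) ^ 2) ∂μ) ?_ ?_
  · rw [lintegral_const]
    exact ENNReal.mul_ne_top ENNReal.ofReal_ne_top (measure_ne_top _ _)
  · refine lintegral_mono_ae (hμ.mono fun x hx => ENNReal.ofReal_le_ofReal ?_)
    nlinarith [hx.1, hx.2]

lemma aemeasurable_quantile_prodMk :
    AEMeasurable (fun t => (quantile μ t, quantile ν t)) (volume.restrict (Ioo 0 1)) :=
  aemeasurable_quantile.prodMk aemeasurable_quantile

lemma lintegral_quantileCoupling {f : ℝ × ℝ → ℝ≥0∞} (hf : Measurable f) :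
    ∫⁻ p, f p ∂(quantileCoupling μ ν) = ∫⁻ t in Ioo 0 1, f (quantile μ t, quantile ν t) :=
  lintegral_map' hf.aemeasurable aemeasurable_quantile_prodMk

variable [IsProbabilityMeasure μ] [IsProbabilityMeasure ν]

instance : IsProbabilityMeasure (quantileCoupling μ ν) :=
  Measure.isProbabilityMeasure_map aemeasurable_quantile_prodMk

lemma isCoupling_quantileCoupling : IsCoupling (quantileCoupling μ ν) μ ν := by
  refine ⟨inferInstance, ?_, ?_⟩
  · rw [quantileCoupling, AEMeasurable.map_map_of_aemeasurable measurable_fst.aemeasurable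
      aemeasurable_quantile_prodMk]
    exact map_quantile
  · rw [quantileCoupling, AEMeasurable.map_map_of_aemeasurable measurable_snd.aemeasurable
      aemeasurable_quantile_prodMk]
    exact map_quantile

lemma quantileCoupling_Ioi_prod_Ioi (s t : ℝ) :
    quantileCoupling μ ν (Ioi s ×ˢ Ioi t) = min (μ (Ioi s)) (ν (Ioi t)) := by
  rw [quantileCoupling, Measure.map_apply_of_aemeasurable aemeasurable_quantile_prodMk
      (measurableSet_Ioi.prod measurableSet_Ioi), mk_preimage_prod,
    ← restrict_Ioo_preimage_quantile (μ := μ) measurableSet_Ioi,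
    ← restrict_Ioo_preimage_quantile (μ := ν) measurableSet_Ioi]
  simp only [Measure.restrict_apply' measurableSet_Ioo, inter_inter_distrib_right,
    preimage_quantile_Ioi_inter_Ioo, Ioo_inter_Ioo, Real.volume_Ioo, min_self]
  rcases le_total (cdf μ s) (cdf ν t) with h | h
  · rw [max_eq_right h, min_eq_right (ENNReal.ofReal_le_ofReal (by linarith))]
  · rw [max_eq_left h, min_eq_left (ENNReal.ofReal_le_ofReal (by linarith))]

end Coupling

section Wasserstein

variable {π : Measure (ℝ × ℝ)} {μ ν : Measure ℝ} [IsProbabilityMeasure μ] [IsProbabilityMeasure ν]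
  {a b : ℝ}

lemma IsCoupling.lintegral_quantileCoupling_le (hπ : IsCoupling π μ ν)
    (hμ : ∀ᵐ x ∂μ, x ∈ Icc a b) (hν : ∀ᵐ y ∂ν, y ∈ Icc a b) :
    ∫⁻ p, ENNReal.ofReal ((p.1 - p.2) ^ 2) ∂(quantileCoupling μ ν)
      ≤ ∫⁻ p, ENNReal.ofReal ((p.1 - p.2) ^ 2) ∂π := by
  have := hπ.1
  have hμa : ∀ᵐ x ∂μ, a ≤ x := hμ.mono fun _ hx => hx.1
  have hνa : ∀ᵐ y ∂ν, a ≤ y := hν.mono fun _ hy => hy.1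
  have hM := ENNReal.add_ne_top.2
    ⟨lintegral_ofReal_sub_sq_ne_top hμ, lintegral_ofReal_sub_sq_ne_top hν⟩
  have hq := isCoupling_quantileCoupling.lintegral_sq_sub_add_two_mul hμa hνa
  have hp := hπ.lintegral_sq_sub_add_two_mul hμa hνa
  have hprod : ∫⁻ p, ENNReal.ofReal (p.1 - a) * ENNReal.ofReal (p.2 - a) ∂π
      ≤ ∫⁻ p, ENNReal.ofReal (p.1 - a) * ENNReal.ofReal (p.2 - a) ∂(quantileCoupling μ ν) := by
    rw [lintegral_ofReal_sub_mul_ofReal_sub, lintegral_ofReal_sub_mul_ofReal_sub]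
    refine lintegral_mono fun z => ?_
    rw [quantileCoupling_Ioi_prod_Ioi]
    exact hπ.measure_prod_le_min measurableSet_Ioi measurableSet_Ioi
  rw [ENNReal.eq_sub_of_add_eq (ne_top_of_le_ne_top hM (hq ▸ le_add_self)) hq,
    ENNReal.eq_sub_of_add_eq (ne_top_of_le_ne_top hM (hp ▸ le_add_self)) hp]
  gcongr

lemma W2sq_eq_lintegral_quantile (hμ : ∀ᵐ x ∂μ, x ∈ Icc a b) (hν : ∀ᵐ y ∂ν, y ∈ Icc a b) :
    W2sq μ ν = ∫⁻ t in Ioo 0 1, ENNReal.ofReal ((quantile μ t - quantile ν t) ^ 2) := by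
  have hcost : ∫⁻ p, ENNReal.ofReal ((p.1 - p.2) ^ 2) ∂(quantileCoupling μ ν)
      = ∫⁻ t in Ioo 0 1, ENNReal.ofReal ((quantile μ t - quantile ν t) ^ 2) :=
    lintegral_quantileCoupling (by fun_prop)
  refine le_antisymm (sInf_le ⟨_, isCoupling_quantileCoupling, hcost.symm⟩) (le_sInf ?_)
  rintro _ ⟨π, hπ, rfl⟩
  exact hcost ▸ hπ.lintegral_quantileCoupling_le hμ hν

lemma W2_eq_norm_toLp_sub (hμ : ∀ᵐ x ∂μ, x ∈ Icc a b) (hν : ∀ᵐ y ∂ν, y ∈ Icc a b) :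
    W2 μ ν = ‖(memLp_quantile hμ 2).toLp - (memLp_quantile hν 2).toLp‖ := by
  rw [← MemLp.toLp_sub, Lp.norm_toLp, eLpNorm_eq_lintegral_rpow_enorm_toReal two_ne_zero
    ENNReal.ofNat_ne_top, W2, W2sq_eq_lintegral_quantile hμ hν, Real.sqrt_eq_rpow,
    ENNReal.toReal_rpow]
  congr 3 with t
  simp [Real.enorm_eq_ofReal_abs, ← ENNReal.ofReal_pow (abs_nonneg _)]

end Wasserstein

/-- For `0 < H ≤ 1`, the function `(μ,ν) ↦ W₂(μ,ν)^(2H)` is a negative definite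
kernel on the set of Borel probability measures supported in a compact subset `Ω`
of `ℝ`: for any such measures `μ₁, …, μₙ` and reals `c₁, …, cₙ` with `∑ cᵢ = 0`, we
have `∑_{i,j} cᵢ cⱼ W₂(μᵢ, μⱼ)^(2H) ≤ 0`. -/
theorem W2_rpow_negative_definite (Ω : Set ℝ) (hΩ : IsCompact Ω)
    (H : ℝ) (hH0 : 0 < H) (hH1 : H ≤ 1)
    (n : ℕ) (μ : Fin n → Measure ℝ) (hprob : ∀ i, IsProbabilityMeasure (μ i))
    (hsupp : ∀ i, μ i Ωᶜ = 0) (c : Fin n → ℝ) (hc : ∑ i, c i = 0) :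
    ∑ i, ∑ j, c i * c j * W2 (μ i) (μ j) ^ (2 * H) ≤ 0 := by
  obtain ⟨a, ha⟩ := hΩ.bddBelow
  obtain ⟨b, hb⟩ := hΩ.bddAbove
  have hμ : ∀ i, ∀ᵐ x ∂μ i, x ∈ Icc a b := fun i =>
    measure_mono_null (compl_subset_compl.2 fun x hx => ⟨ha hx, hb hx⟩) (hsupp i)
  simp_rw [W2_eq_norm_toLp_sub (hμ _) (hμ _)]
  exact sum_mul_mul_norm_sub_rpow_nonpos _ hc hH0 hH1
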